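/- arXiv:2409.09167 — 3 statements merged into one kernel-verified Lean document; each statement's English description precedes it below -/
import Mathlib

section
/- Let q be a prime power and let C be a conjugacy class of the affine group G_q = F ⋊ Fˣ with |C| ≥ 2. Then the matrix B_C belongs to the Terwilliger algebra T(G_q), and its one-dimensional span ℂ·B_C is a two-sided ideal of T(G_q). -/
/-- The canonical homomorphism from additive automorphisms of `A` to multiplicative
automorphisms of `Multiplicative A`. -/
def addAutToMulAut (A : Type*) [AddGroup A] : Multiplicative (AddAut A) →* MulAut (Multiplicative A) where
  toFun f := AddEquiv.toMultiplicative (Multiplicative.toAdd f)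
  map_one' := rfl
  map_mul' _ _ := rfl

/-- The action of the unit group `Fˣ` on the additive group of the field `F`
by multiplication. -/
def affineAction (F : Type*) [Field F] : Fˣ →* MulAut (Multiplicative F) :=
  (addAutToMulAut F).comp (DistribMulAction.toAddAut Fˣ F)

/-- The one-dimensional affine group `G_q = F ⋊ Fˣ` of a field `F`: the semidirect product of
the additive group of `F` by its multiplicative group acting by multiplication. -/
abbrev AffineGroup (F : Type*) [Field F] : Type _ :=
  SemidirectProduct (Multiplicative F) Fˣ (affineAction F)

/-- A semidirect product is equivalent, as a type, to the product. -/
def sdpEquivProd {N G : Type*} [Group N] [Group G] {φ : G →* MulAut N} :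
    SemidirectProduct N G φ ≃ N × G where
  toFun x := (x.left, x.right)
  invFun p := ⟨p.1, p.2⟩
  left_inv := fun ⟨_, _⟩ => rfl
  right_inv := fun _ => rfl

instance {N G : Type*} [Group N] [Group G] {φ : G →* MulAut N} [Fintype N] [Fintype G] :
    Fintype (SemidirectProduct N G φ) := Fintype.ofEquiv _ sdpEquivProd.symm

instance {N G : Type*} [Group N] [Group G] {φ : G →* MulAut N} [DecidableEq N] [DecidableEq G] :
    DecidableEq (SemidirectProduct N G φ) := Equiv.decidableEq sdpEquivProd

open Classical in
/-- The adjacency matrix of a conjugacy class `C`: the 0-1 matrix whose `(x,y)` entry is `1`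
exactly when `y * x⁻¹ ∈ C`. -/
noncomputable def AMat (G : Type*) [Group G] [Fintype G] (C : ConjClasses G) : Matrix G G ℂ :=
  Matrix.of fun x y => if y * x⁻¹ ∈ C.carrier then (1 : ℂ) else 0

open Classical in
/-- The dual idempotent of a conjugacy class `C`: the diagonal 0-1 matrix whose `(y,y)` entry
is `1` exactly when `y ∈ C`. -/
noncomputable def EMat (G : Type*) [Group G] [Fintype G] (C : ConjClasses G) : Matrix G G ℂ :=
  Matrix.of fun x y => if x = y ∧ y ∈ C.carrier then (1 : ℂ) else 0

/-- The Terwilliger algebra of the group association scheme of `G` (with base point the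
identity): the unital `ℂ`-subalgebra of `M_{|G|}(ℂ)` generated by the matrices `A_C` and
`E*_C` for all conjugacy classes `C` of `G`. -/
noncomputable def TerwilligerAlgebra (G : Type*) [Group G] [Fintype G] [DecidableEq G] :
    Subalgebra ℂ (Matrix G G ℂ) :=
  Algebra.adjoin ℂ (Set.range (AMat G) ∪ Set.range (EMat G))

open Classical in
/-- For a conjugacy class `C` with `|C| ≥ 2`, the matrix `B_C` whose `(x,y)` entry is `1` if
`x = y ∈ C`, is `-1/(|C|-1)` if `x ≠ y` and `x, y ∈ C`, and is `0` otherwise. -/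
noncomputable def BMat (G : Type*) [Group G] [Fintype G] (C : ConjClasses G) : Matrix G G ℂ :=
  Matrix.of fun x y =>
    if x = y ∧ x ∈ C.carrier then (1 : ℂ)
    else if x ∈ C.carrier ∧ y ∈ C.carrier then -1 / ((C.carrier.ncard : ℂ) - 1)
    else 0

section AffineDev
set_option linter.unusedSectionVars false

variable {F : Type*} [Field F] [Fintype F] [DecidableEq F]

local notation "GG" => AffineGroup F

lemma aff_apply (u : Fˣ) (n : Multiplicative F) :
    affineAction F u n = Multiplicative.ofAdd ((u : F) * n.toAdd) := rfl

lemma right_of_isConj {g x : GG} (h : IsConj g x) : x.right = g.right := by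
  obtain ⟨c, hc⟩ := isConj_iff.mp h
  rw [← hc]
  simp [mul_right_comm]

lemma carrier_one : (ConjClasses.mk (1 : GG)).carrier = {(1 : GG)} := by
  ext x
  simp [ConjClasses.mem_carrier_iff_mk_eq, ConjClasses.mk_eq_mk_iff_isConj]

lemma carrier_of_right_ne_one {g : GG} (hg : g.right ≠ 1) :
    (ConjClasses.mk g).carrier = {x : GG | x.right = g.right} := by
  have hga : ((g.right : F)) ≠ 1 := fun h => hg (Units.ext h)
  have h1 : (1 : F) - (g.right : F) ≠ 0 := sub_ne_zero.mpr (Ne.symm hga)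
  ext x
  simp only [ConjClasses.mem_carrier_iff_mk_eq, ConjClasses.mk_eq_mk_iff_isConj,
    Set.mem_setOf_eq]
  constructor
  · intro h
    exact (right_of_isConj h.symm).symm ▸ rfl
  · intro hx
    refine (isConj_iff.mpr ⟨⟨Multiplicative.ofAdd
      ((x.left.toAdd - g.left.toAdd) / (1 - (g.right : F))), 1⟩, ?_⟩).symm
    apply SemidirectProduct.ext
    · apply Multiplicative.toAdd.injective
      simp [SemidirectProduct.mul_left, SemidirectProduct.mul_right,
        SemidirectProduct.inv_left, SemidirectProduct.inv_right, aff_apply]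
      linear_combination (div_mul_cancel₀ (x.left.toAdd - g.left.toAdd) h1)
    · simp [SemidirectProduct.mul_right, SemidirectProduct.inv_right, hx]
lemma carrier_of_translation {g : GG} (hg1 : g ≠ 1) (hgr : g.right = 1) :
    (ConjClasses.mk g).carrier = {x : GG | x ≠ 1 ∧ x.right = 1} := by
  have hgl : g.left ≠ 1 := by
    intro h; exact hg1 (SemidirectProduct.ext h hgr)
  have hgb : g.left.toAdd ≠ 0 := hgl
  ext x
  simp only [ConjClasses.mem_carrier_iff_mk_eq, ConjClasses.mk_eq_mk_iff_isConj,
    Set.mem_setOf_eq]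
  constructor
  · intro h
    refine ⟨?_, (right_of_isConj h.symm).symm ▸ hgr⟩
    intro hx1
    rw [hx1] at h
    exact hg1 (isConj_one_right.mp h)
  · rintro ⟨hx1, hxr⟩
    have hxl : x.left ≠ 1 := by
      intro h; exact hx1 (SemidirectProduct.ext h hxr)
    have hxb : x.left.toAdd ≠ 0 := hxl
    refine (isConj_iff.mpr ⟨⟨1, Units.mk0 (x.left.toAdd / g.left.toAdd)
      (div_ne_zero hxb hgb)⟩, ?_⟩).symm
    apply SemidirectProduct.ext
    · apply Multiplicative.toAdd.injective
      simp [SemidirectProduct.mul_left, SemidirectProduct.mul_right,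
        SemidirectProduct.inv_left, SemidirectProduct.inv_right, aff_apply, hgr]
      field_simp
    · simp [SemidirectProduct.mul_right, SemidirectProduct.inv_right, hgr, hxr]

lemma exists_rC (C : ConjClasses GG) : ∃ r : Fˣ, ∀ y ∈ C.carrier, SemidirectProduct.right y = r := by
  obtain ⟨g, hg⟩ := C.exists_rep
  refine ⟨g.right, fun y hy => ?_⟩
  rw [← hg, ConjClasses.mem_carrier_iff_mk_eq, ConjClasses.mk_eq_mk_iff_isConj] at hy
  exact right_of_isConj hy.symm

lemma Bsupp_row (C : ConjClasses GG) {y : GG} (hy : y ∉ C.carrier) (z : GG) : BMat GG C y z = 0 := by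
  simp only [BMat, Matrix.of_apply]
  split_ifs with h1 h2
  · exact absurd h1.2 hy
  · exact absurd h2.1 hy
  · rfl

lemma Bsupp_col (C : ConjClasses GG) {z : GG} (hz : z ∉ C.carrier) (x : GG) : BMat GG C x z = 0 := by
  simp only [BMat, Matrix.of_apply]
  split_ifs with h1 h2
  · rcases h1 with ⟨rfl, h⟩; exact absurd h hz
  · exact absurd h2.2 hz
  · rfl

lemma Bsymm (C : ConjClasses GG) (x y : GG) : BMat GG C x y = BMat GG C y x := by
  classical
  by_cases hxy : x = y
  · rw [hxy]
  · have h1 : ¬(x = y ∧ x ∈ C.carrier) := fun h => hxy h.1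
    have h2 : ¬(y = x ∧ y ∈ C.carrier) := fun h => hxy h.1.symm
    simp only [BMat, Matrix.of_apply, if_neg h1, if_neg h2]
    exact if_congr and_comm rfl rfl

lemma cast_ncard_ne {C : ConjClasses GG} (hC : 2 ≤ C.carrier.ncard) : ((C.carrier.ncard : ℂ) - 1) ≠ 0 := by
  have : C.carrier.ncard ≠ 1 := by omega
  exact sub_ne_zero.mpr (by exact_mod_cast this)

lemma Bcol {C : ConjClasses GG} (hC : 2 ≤ C.carrier.ncard) (z : GG) : ∑ y, BMat GG C y z = 0 := by
  have hne := cast_ncard_ne hC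
  by_cases hz : z ∈ C.carrier
  · have hcard : C.carrier.toFinset.card = C.carrier.ncard :=
      (Set.ncard_eq_toFinset_card' _).symm
    rw [← Finset.sum_subset (Finset.subset_univ C.carrier.toFinset)
      (fun y _ hy => Bsupp_row C (by simpa using hy) z)]
    have hzmem : z ∈ C.carrier.toFinset := by simpa using hz
    rw [← Finset.sum_erase_add _ _ hzmem]
    have h1 : BMat GG C z z = 1 := by
      simp only [BMat, Matrix.of_apply]
      rw [if_pos ⟨rfl, hz⟩]
    have h2 : ∀ y ∈ C.carrier.toFinset.erase z,
        BMat GG C y z = -1 / ((C.carrier.ncard : ℂ) - 1) := by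
      intro y hy
      obtain ⟨hyz, hyC⟩ := Finset.mem_erase.mp hy
      simp only [BMat, Matrix.of_apply]
      rw [if_neg (fun h => hyz h.1), if_pos ⟨by simpa using hyC, hz⟩]
    rw [Finset.sum_congr rfl h2, Finset.sum_const, Finset.card_erase_of_mem hzmem, hcard, h1]
    have hcast : ((C.carrier.ncard - 1 : ℕ) : ℂ) = (C.carrier.ncard : ℂ) - 1 := by
      have : 1 ≤ C.carrier.ncard := by omega
      push_cast [this]; ring
    rw [nsmul_eq_mul, hcast]
    field_simp
    norm_num
  · exact Finset.sum_eq_zero (fun y _ => Bsupp_col C hz y)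

lemma Brow {C : ConjClasses GG} (hC : 2 ≤ C.carrier.ncard) (x : GG) : ∑ y, BMat GG C x y = 0 := by
  rw [Finset.sum_congr rfl (fun y _ => Bsymm C x y)]
  exact Bcol hC x

lemma fibercol {C : ConjClasses GG} (hC : 2 ≤ C.carrier.ncard) (r : Fˣ) (z : GG) :
    ∑ y : GG, (if SemidirectProduct.right y = r then BMat GG C y z else 0) = 0 := by
  obtain ⟨rC, hrC⟩ := exists_rC C
  by_cases hr : r = rC
  · subst hr
    rw [Finset.sum_congr rfl (fun y _ => ?_), Bcol hC z]
    by_cases h : SemidirectProduct.right y = r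
    · rw [if_pos h]
    · rw [if_neg h, Bsupp_row C (fun hy => h (hrC y hy)) z]
  · refine Finset.sum_eq_zero (fun y _ => ?_)
    by_cases h : SemidirectProduct.right y = r
    · rw [if_pos h, Bsupp_row C (fun hy => hr ((h ▸ hrC y hy : r = rC))) z]
    · rw [if_neg h]

lemma fiberrow {C : ConjClasses GG} (hC : 2 ≤ C.carrier.ncard) (r : Fˣ) (x : GG) :
    ∑ y : GG, (if SemidirectProduct.right y = r then BMat GG C x y else 0) = 0 := by
  rw [Finset.sum_congr rfl (fun y _ => by rw [Bsymm C x y])]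
  exact fibercol hC r x
lemma EMat_mul_B {C : ConjClasses GG} (D : ConjClasses GG) :
    ∃ μ : ℂ, EMat GG D * BMat GG C = μ • BMat GG C := by
  classical
  by_cases hD : D = C
  · refine ⟨1, ?_⟩
    subst hD
    ext x z
    rw [Matrix.mul_apply, one_smul]
    have key : ∀ y, EMat GG D x y * BMat GG D y z
        = if x = y then (if x ∈ D.carrier then BMat GG D y z else 0) else 0 := by
      intro y
      simp only [EMat, Matrix.of_apply]
      by_cases h1 : x = y
      · subst h1
        by_cases h2 : x ∈ D.carrier <;> simp [h2]
      · simp [h1]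
    rw [Finset.sum_congr rfl (fun y _ => key y), Finset.sum_ite_eq]
    simp only [Finset.mem_univ, if_true]
    by_cases h2 : x ∈ D.carrier
    · rw [if_pos h2]
    · rw [if_neg h2, Bsupp_row D h2 z]
  · refine ⟨0, ?_⟩
    ext x z
    rw [Matrix.mul_apply, zero_smul, Matrix.zero_apply]
    refine Finset.sum_eq_zero (fun y _ => ?_)
    simp only [EMat, Matrix.of_apply]
    split_ifs with h
    · rw [one_mul]
      rcases h with ⟨rfl, hyD⟩
      apply Bsupp_row
      intro hyC
      exact hD ((ConjClasses.mem_carrier_iff_mk_eq.mp hyD).symm.trans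
        (ConjClasses.mem_carrier_iff_mk_eq.mp hyC))
    · rw [zero_mul]

lemma B_mul_EMat {C : ConjClasses GG} (D : ConjClasses GG) :
    ∃ μ : ℂ, BMat GG C * EMat GG D = μ • BMat GG C := by
  classical
  by_cases hD : D = C
  · refine ⟨1, ?_⟩
    subst hD
    ext x z
    rw [Matrix.mul_apply, one_smul]
    have key : ∀ y, BMat GG D x y * EMat GG D y z
        = if y = z then (if z ∈ D.carrier then BMat GG D x y else 0) else 0 := by
      intro y
      simp only [EMat, Matrix.of_apply]
      by_cases h1 : y = z
      · subst h1
        by_cases h2 : y ∈ D.carrier <;> simp [h2]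
      · simp [h1]
    rw [Finset.sum_congr rfl (fun y _ => key y), Finset.sum_ite_eq']
    simp only [Finset.mem_univ, if_true]
    by_cases h2 : z ∈ D.carrier
    · rw [if_pos h2]
    · rw [if_neg h2, Bsupp_col D h2 x]
  · refine ⟨0, ?_⟩
    ext x z
    rw [Matrix.mul_apply, zero_smul, Matrix.zero_apply]
    refine Finset.sum_eq_zero (fun y _ => ?_)
    simp only [EMat, Matrix.of_apply]
    split_ifs with h
    · rw [mul_one]
      rcases h with ⟨rfl, hzD⟩
      apply Bsupp_col
      intro hzC
      exact hD ((ConjClasses.mem_carrier_iff_mk_eq.mp hzD).symm.trans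
        (ConjClasses.mem_carrier_iff_mk_eq.mp hzC))
    · rw [mul_zero]

lemma AMat_mul_B {C : ConjClasses GG} (hC : 2 ≤ C.carrier.ncard) (D : ConjClasses GG) :
    ∃ μ : ℂ, AMat GG D * BMat GG C = μ • BMat GG C := by
  classical
  obtain ⟨g, hg⟩ := D.exists_rep
  subst hg
  by_cases h1 : g = 1
  · refine ⟨1, ?_⟩
    subst h1
    ext x z
    rw [Matrix.mul_apply, one_smul]
    have key : ∀ y : GG, AMat GG (ConjClasses.mk 1) x y * BMat GG C y z
        = if y = x then BMat GG C y z else 0 := by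
      intro y
      simp only [AMat, Matrix.of_apply, carrier_one, Set.mem_singleton_iff, mul_inv_eq_one]
      by_cases h : y = x <;> simp [h]
    rw [Finset.sum_congr rfl (fun y _ => key y), Finset.sum_ite_eq']
    simp
  · by_cases h2 : g.right = 1
    · refine ⟨-1, ?_⟩
      ext x z
      rw [Matrix.mul_apply]
      have key : ∀ y : GG, AMat GG (ConjClasses.mk g) x y * BMat GG C y z
          = (if SemidirectProduct.right y = x.right then BMat GG C y z else 0)
            - (if y = x then BMat GG C y z else 0) := by
        intro y
        simp only [AMat, Matrix.of_apply, carrier_of_translation h1 h2, Set.mem_setOf_eq]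
        have hcond : (y * x⁻¹ ≠ 1 ∧ (y * x⁻¹).right = 1)
            ↔ (y ≠ x ∧ SemidirectProduct.right y = SemidirectProduct.right x) := by
          simp [SemidirectProduct.mul_right, SemidirectProduct.inv_right, mul_inv_eq_one, ne_eq]
        rw [if_congr hcond rfl rfl]
        by_cases hy : y = x
        · subst hy; simp
        · by_cases hr : SemidirectProduct.right y = SemidirectProduct.right x <;>
            simp [hy, hr]
      rw [Finset.sum_congr rfl (fun y _ => key y), Finset.sum_sub_distrib,
        fibercol hC x.right z, Finset.sum_ite_eq']
      simp
    · refine ⟨0, ?_⟩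
      ext x z
      rw [Matrix.mul_apply, zero_smul, Matrix.zero_apply]
      have key : ∀ y : GG, AMat GG (ConjClasses.mk g) x y * BMat GG C y z
          = if SemidirectProduct.right y = g.right * x.right then BMat GG C y z else 0 := by
        intro y
        simp only [AMat, Matrix.of_apply, carrier_of_right_ne_one h2, Set.mem_setOf_eq]
        have hcond : (y * x⁻¹).right = g.right
            ↔ SemidirectProduct.right y = g.right * SemidirectProduct.right x := by
          rw [SemidirectProduct.mul_right, SemidirectProduct.inv_right]
          exact mul_inv_eq_iff_eq_mul
        rw [if_congr hcond rfl rfl]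
        split_ifs <;> simp
      rw [Finset.sum_congr rfl (fun y _ => key y), fibercol hC]

lemma B_mul_AMat {C : ConjClasses GG} (hC : 2 ≤ C.carrier.ncard) (D : ConjClasses GG) :
    ∃ μ : ℂ, BMat GG C * AMat GG D = μ • BMat GG C := by
  classical
  obtain ⟨g, hg⟩ := D.exists_rep
  subst hg
  by_cases h1 : g = 1
  · refine ⟨1, ?_⟩
    subst h1
    ext x z
    rw [Matrix.mul_apply, one_smul]
    have key : ∀ y : GG, BMat GG C x y * AMat GG (ConjClasses.mk 1) y z
        = if y = z then BMat GG C x y else 0 := by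
      intro y
      simp only [AMat, Matrix.of_apply, carrier_one, Set.mem_singleton_iff, mul_inv_eq_one]
      by_cases h : y = z
      · subst h; simp
      · simp [h, Ne.symm h, fun hzy : z = y => h hzy.symm]
    rw [Finset.sum_congr rfl (fun y _ => key y), Finset.sum_ite_eq']
    simp
  · by_cases h2 : g.right = 1
    · refine ⟨-1, ?_⟩
      ext x z
      rw [Matrix.mul_apply]
      have key : ∀ y : GG, BMat GG C x y * AMat GG (ConjClasses.mk g) y z
          = (if SemidirectProduct.right y = z.right then BMat GG C x y else 0)
            - (if y = z then BMat GG C x y else 0) := by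
        intro y
        simp only [AMat, Matrix.of_apply, carrier_of_translation h1 h2, Set.mem_setOf_eq]
        have hcond : (z * y⁻¹ ≠ 1 ∧ (z * y⁻¹).right = 1)
            ↔ (y ≠ z ∧ SemidirectProduct.right y = SemidirectProduct.right z) := by
          simp [SemidirectProduct.mul_right, SemidirectProduct.inv_right, mul_inv_eq_one,
            ne_eq, eq_comm]
        rw [if_congr hcond rfl rfl]
        by_cases hy : y = z
        · subst hy; simp
        · by_cases hr : SemidirectProduct.right y = SemidirectProduct.right z <;>
            simp [hy, hr]
      rw [Finset.sum_congr rfl (fun y _ => key y), Finset.sum_sub_distrib,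
        fiberrow hC z.right x, Finset.sum_ite_eq']
      simp
    · refine ⟨0, ?_⟩
      ext x z
      rw [Matrix.mul_apply, zero_smul, Matrix.zero_apply]
      have key : ∀ y : GG, BMat GG C x y * AMat GG (ConjClasses.mk g) y z
          = if SemidirectProduct.right y = g.right⁻¹ * z.right then BMat GG C x y else 0 := by
        intro y
        simp only [AMat, Matrix.of_apply, carrier_of_right_ne_one h2, Set.mem_setOf_eq]
        have hcond : (z * y⁻¹).right = g.right
            ↔ SemidirectProduct.right y = g.right⁻¹ * SemidirectProduct.right z := by
          rw [SemidirectProduct.mul_right, SemidirectProduct.inv_right]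
          constructor
          · intro h
            rw [mul_inv_eq_iff_eq_mul.mp h, inv_mul_cancel_left]
          · intro h
            exact mul_inv_eq_iff_eq_mul.mpr (by rw [h, mul_inv_cancel_left])
        rw [if_congr hcond rfl rfl]
        split_ifs <;> simp
      rw [Finset.sum_congr rfl (fun y _ => key y), fiberrow hC]
noncomputable local instance fintypeConjClasses : Fintype (ConjClasses GG) :=
  Fintype.ofFinite _

lemma sum_AMat_apply (x z : GG) : (∑ D : ConjClasses GG, AMat GG D) x z = 1 := by
  classical
  rw [Matrix.sum_apply]
  have key : ∀ D : ConjClasses GG, AMat GG D x z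
      = if ConjClasses.mk (z * x⁻¹) = D then 1 else 0 := by
    intro D
    simp only [AMat, Matrix.of_apply, ConjClasses.mem_carrier_iff_mk_eq]
  rw [Finset.sum_congr rfl (fun D _ => key D), Finset.sum_ite_eq]
  simp

lemma B_mem {C : ConjClasses GG} (hC : 2 ≤ C.carrier.ncard) :
    BMat GG C ∈ TerwilligerAlgebra GG := by
  classical
  have hne := cast_ncard_ne hC
  have key : BMat GG C = ((C.carrier.ncard : ℂ) / ((C.carrier.ncard : ℂ) - 1)) • EMat GG C
      - (1 / ((C.carrier.ncard : ℂ) - 1)) •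
        (EMat GG C * (∑ D : ConjClasses GG, AMat GG D) * EMat GG C) := by
    ext x z
    have hmid : (EMat GG C * (∑ D : ConjClasses GG, AMat GG D) * EMat GG C) x z
        = if x ∈ C.carrier ∧ z ∈ C.carrier then 1 else 0 := by
      have h1 : ∀ w, (EMat GG C * (∑ D : ConjClasses GG, AMat GG D)) x w
          = if x ∈ C.carrier then 1 else 0 := by
        intro w
        rw [Matrix.mul_apply]
        have h0 : ∀ y, EMat GG C x y * (∑ D : ConjClasses GG, AMat GG D) y w
            = if x = y then (if x ∈ C.carrier then 1 else 0) else 0 := by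
          intro y
          rw [sum_AMat_apply, mul_one]
          simp only [EMat, Matrix.of_apply]
          by_cases h : x = y
          · subst h; simp
          · simp [h]
        rw [Finset.sum_congr rfl (fun y _ => h0 y), Finset.sum_ite_eq]
        simp
      rw [Matrix.mul_apply]
      have h2 : ∀ w, (EMat GG C * (∑ D : ConjClasses GG, AMat GG D)) x w * EMat GG C w z
          = if w = z then (if x ∈ C.carrier ∧ z ∈ C.carrier then 1 else 0) else 0 := by
        intro w
        rw [h1 w]
        simp only [EMat, Matrix.of_apply]
        by_cases hw : w = z
        · subst hw
          by_cases hx : x ∈ C.carrier <;> by_cases hz : w ∈ C.carrier <;> simp [hx, hz]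
        · simp [hw]
      rw [Finset.sum_congr rfl (fun w _ => h2 w), Finset.sum_ite_eq']
      simp
    rw [Matrix.sub_apply, Matrix.smul_apply, Matrix.smul_apply, hmid]
    simp only [BMat, EMat, Matrix.of_apply, smul_eq_mul]
    by_cases hxz : x = z
    · subst hxz
      by_cases hx : x ∈ C.carrier <;> simp [hx] <;> field_simp
    · by_cases hx : x ∈ C.carrier <;> by_cases hz : z ∈ C.carrier <;>
        simp [hxz, hx, hz, neg_div]
  rw [key]
  have hE : EMat GG C ∈ TerwilligerAlgebra GG :=
    Algebra.subset_adjoin (Set.mem_union_right _ ⟨C, rfl⟩)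
  have hA : (∑ D : ConjClasses GG, AMat GG D) ∈ TerwilligerAlgebra GG :=
    sum_mem (fun D _ => Algebra.subset_adjoin (Set.mem_union_left _ ⟨D, rfl⟩))
  exact sub_mem (Subalgebra.smul_mem _ hE _)
    (Subalgebra.smul_mem _ (mul_mem (mul_mem hE hA) hE) _)
lemma T_products {C : ConjClasses GG} (hC : 2 ≤ C.carrier.ncard) :
    ∀ M ∈ TerwilligerAlgebra GG,
      (∃ μ : ℂ, M * BMat GG C = μ • BMat GG C) ∧
      (∃ μ : ℂ, BMat GG C * M = μ • BMat GG C) := by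
  intro M hM
  refine Algebra.adjoin_induction
    (p := fun M _ => (∃ μ : ℂ, M * BMat GG C = μ • BMat GG C) ∧
      (∃ μ : ℂ, BMat GG C * M = μ • BMat GG C)) ?_ ?_ ?_ ?_ hM
  · rintro x (⟨D, rfl⟩ | ⟨D, rfl⟩)
    · exact ⟨AMat_mul_B hC D, B_mul_AMat hC D⟩
    · exact ⟨EMat_mul_B D, B_mul_EMat D⟩
  · intro r
    constructor
    · exact ⟨r, by rw [Algebra.algebraMap_eq_smul_one, smul_mul_assoc, one_mul]⟩
    · exact ⟨r, by rw [Algebra.algebraMap_eq_smul_one, mul_smul_comm, mul_one]⟩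
  · rintro x y _ _ ⟨⟨a, ha⟩, ⟨b, hb⟩⟩ ⟨⟨c, hc⟩, ⟨d, hd⟩⟩
    constructor
    · exact ⟨a + c, by rw [add_mul, ha, hc, add_smul]⟩
    · exact ⟨b + d, by rw [mul_add, hb, hd, add_smul]⟩
  · rintro x y _ _ ⟨⟨a, ha⟩, ⟨b, hb⟩⟩ ⟨⟨c, hc⟩, ⟨d, hd⟩⟩
    constructor
    · exact ⟨a * c, by rw [mul_assoc, hc, mul_smul_comm, ha, smul_smul, mul_comm a c]⟩
    · exact ⟨b * d, by rw [← mul_assoc, hb, smul_mul_assoc, hd, smul_smul]⟩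
end AffineDev
/-- For a conjugacy class `C` of the affine group `G_q = F ⋊ Fˣ` with `|C| ≥ 2`, the matrix
`B_C` belongs to the Terwilliger algebra `T(G_q)` and its one-dimensional span `ℂ·B_C` is a
two-sided ideal of `T(G_q)`. -/
theorem affineGroup_BMat_ideal (q : ℕ) (hq : IsPrimePow q)
    (F : Type*) [Field F] [Fintype F] [DecidableEq F] (hF : Fintype.card F = q)
    (C : ConjClasses (AffineGroup F)) (hC : 2 ≤ C.carrier.ncard) :
    BMat (AffineGroup F) C ∈ TerwilligerAlgebra (AffineGroup F) ∧
    Module.finrank ℂ (Submodule.span ℂ {BMat (AffineGroup F) C}) = 1 ∧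
    ∀ M ∈ TerwilligerAlgebra (AffineGroup F),
      M * BMat (AffineGroup F) C ∈ Submodule.span ℂ {BMat (AffineGroup F) C} ∧
      BMat (AffineGroup F) C * M ∈ Submodule.span ℂ {BMat (AffineGroup F) C} := by
  classical
  obtain ⟨x0, hx0⟩ : C.carrier.Nonempty := by
    rcases Set.eq_empty_or_nonempty C.carrier with h | h
    · rw [h, Set.ncard_empty] at hC; omega
    · exact h
  have hBne : BMat (AffineGroup F) C ≠ 0 := by
    intro h
    have h1 : BMat (AffineGroup F) C x0 x0 = 1 := by
      simp [BMat, hx0]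
    rw [h] at h1
    simp at h1
  refine ⟨B_mem hC, finrank_span_singleton hBne, fun M hM => ?_⟩
  obtain ⟨⟨a, ha⟩, ⟨b, hb⟩⟩ := T_products hC M hM
  exact ⟨Submodule.mem_span_singleton.mpr ⟨a, ha.symm⟩,
    Submodule.mem_span_singleton.mpr ⟨b, hb.symm⟩⟩
end

section
/- Let q be a prime power, let N = F × {1} be the translation subgroup of the affine group G_q = F ⋊ Fˣ, let C be a conjugacy class of G_q with |C| ≥ 2, and let D be any conjugacy class of G_q. Then A_D · B_C = B_C if D = {1}; A_D · B_C = −B_C if D = N ∖ {1}; and A_D · B_C = 0 for every other conjugacy class D. -/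
/-- The translation subgroup `N = F × {1}` of the affine group `G_q = F ⋊ Fˣ`. -/
def translationSubgroup (F : Type*) [Field F] : Subgroup (AffineGroup F) :=
  (SemidirectProduct.inl : Multiplicative F →* AffineGroup F).range


/-! ### Auxiliary lemmas -/

section Aux

open Multiplicative

section Generic

variable {H : Type*} [Group H] [Fintype H] [DecidableEq H]

open Classical in
lemma AMat_apply (D : ConjClasses H) (x z : H) :
    AMat H D x z = if z * x⁻¹ ∈ D.carrier then (1 : ℂ) else 0 := rfl

open Classical in
lemma AMat_mul_BMat_apply (C D : ConjClasses H) (x y : H) :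
    (AMat H D * BMat H C) x y
      = ∑ z : H, (if z * x⁻¹ ∈ D.carrier then (1 : ℂ) else 0) * BMat H C z y := by
  rw [Matrix.mul_apply]
  refine Finset.sum_congr rfl fun z _ => ?_
  rw [AMat_apply]

lemma BMat_apply_of_not_mem_right (C : ConjClasses H) {y : H} (hy : y ∉ C.carrier) (z : H) :
    BMat H C z y = 0 := by
  unfold BMat
  rw [Matrix.of_apply, if_neg, if_neg]
  · exact fun h => hy h.2
  · rintro ⟨rfl, hz⟩; exact hy hz

lemma BMat_apply_of_not_mem_left (C : ConjClasses H) {x : H} (hx : x ∉ C.carrier) (y : H) :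
    BMat H C x y = 0 := by
  unfold BMat
  rw [Matrix.of_apply, if_neg, if_neg]
  · exact fun h => hx h.1
  · rintro ⟨rfl, hz⟩; exact hx hz

lemma BMat_apply_self (C : ConjClasses H) {x : H} (hx : x ∈ C.carrier) :
    BMat H C x x = 1 := by
  unfold BMat
  rw [Matrix.of_apply, if_pos ⟨rfl, hx⟩]

lemma BMat_apply_ne (C : ConjClasses H) {x y : H} (hx : x ∈ C.carrier) (hy : y ∈ C.carrier)
    (hxy : x ≠ y) : BMat H C x y = -1 / ((C.carrier.ncard : ℂ) - 1) := by
  unfold BMat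
  rw [Matrix.of_apply, if_neg (fun h => hxy h.1), if_pos ⟨hx, hy⟩]

open Classical in
lemma sum_ite_mem_ncard (s : Set H) :
    ∑ z : H, (if z ∈ s then (1 : ℂ) else 0) = (s.ncard : ℂ) := by
  rw [Finset.sum_boole]
  congr 1
  rw [Set.ncard_eq_toFinset_card']
  congr 1
  ext z
  simp

open Classical in
lemma sum_ite_split (P : H → Prop) (x : H) :
    (∑ z : H, if P z then (1 : ℂ) else 0)
      = (∑ z : H, if P z ∧ z ≠ x then (1 : ℂ) else 0) + (if P x then 1 else 0) := by
  have key : ∀ z : H, (if P z then (1 : ℂ) else 0)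
      = (if P z ∧ z ≠ x then (1 : ℂ) else 0)
        + (if z = x then (if P z then (1 : ℂ) else 0) else 0) := by
    intro z
    by_cases hz : z = x
    · subst hz; by_cases hp : P z <;> simp [hp]
    · by_cases hp : P z <;> simp [hp, hz]
  rw [Finset.sum_congr rfl fun z _ => key z, Finset.sum_add_distrib,
    Finset.sum_ite_eq' Finset.univ x]
  simp

open Classical in
lemma entry_formula (C D : ConjClasses H) {x y : H} (hy : y ∈ C.carrier) :
    (AMat H D * BMat H C) x y
      = (if y * x⁻¹ ∈ D.carrier then (1 : ℂ) else 0)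
            * (1 + 1 / ((C.carrier.ncard : ℂ) - 1))
          - (1 / ((C.carrier.ncard : ℂ) - 1))
            * ∑ z : H, (if z ∈ C.carrier ∧ z * x⁻¹ ∈ D.carrier then (1 : ℂ) else 0) := by
  set c : ℂ := 1 / ((C.carrier.ncard : ℂ) - 1) with hc
  rw [AMat_mul_BMat_apply]
  have key : ∀ z : H,
      (if z * x⁻¹ ∈ D.carrier then (1 : ℂ) else 0) * BMat H C z y
        = (1 + c) * (if z = y ∧ z * x⁻¹ ∈ D.carrier then (1 : ℂ) else 0)
          - c * (if z ∈ C.carrier ∧ z * x⁻¹ ∈ D.carrier then (1 : ℂ) else 0) := by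
    intro z
    unfold BMat
    rw [Matrix.of_apply, hc]
    by_cases hzy : z = y
    · subst hzy
      split_ifs <;> first | (exfalso; tauto) | ring
    · split_ifs <;> first | (exfalso; tauto) | ring
  rw [Finset.sum_congr rfl fun z _ => key z, Finset.sum_sub_distrib, ← Finset.mul_sum,
    ← Finset.mul_sum]
  congr 1
  rw [mul_comm]
  congr 1
  have key2 : ∀ z : H, (if z = y ∧ z * x⁻¹ ∈ D.carrier then (1 : ℂ) else 0)
      = if z = y then (if y * x⁻¹ ∈ D.carrier then (1 : ℂ) else 0) else 0 := by
    intro z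
    by_cases hz : z = y
    · subst hz; by_cases h : z * x⁻¹ ∈ D.carrier <;> simp [h]
    · simp [hz]
  rw [Finset.sum_congr rfl fun z _ => key2 z, Finset.sum_ite_eq' Finset.univ y]
  simp

end Generic

variable {F : Type*} [Field F] [Fintype F] [DecidableEq F]

lemma affineAction_apply (a : Fˣ) (m : Multiplicative F) :
    (affineAction F) a m = Multiplicative.ofAdd ((a : F) * m.toAdd) := rfl

lemma affineAction_comp (g h : Fˣ) (m : Multiplicative F) :
    (affineAction F) g ((affineAction F) h m) = (affineAction F) (g * h) m := by
  rw [map_mul]; rfl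

lemma aff_eq_one_iff (z : AffineGroup F) : z = 1 ↔ z.left = 1 ∧ z.right = 1 := by
  constructor
  · rintro rfl; exact ⟨rfl, rfl⟩
  · rintro ⟨h1, h2⟩; exact SemidirectProduct.ext h1 h2

lemma mem_translation_iff {z : AffineGroup F} :
    z ∈ translationSubgroup F ↔ z.right = 1 := by
  constructor
  · rintro ⟨m, rfl⟩; rfl
  · intro h
    exact ⟨z.left, SemidirectProduct.ext rfl h.symm⟩

lemma translation_diff :
    (translationSubgroup F : Set (AffineGroup F)) \ {1}
      = {z : AffineGroup F | z.right = 1 ∧ z.left ≠ 1} := by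
  ext z
  simp only [Set.mem_diff, SetLike.mem_coe, mem_translation_iff, Set.mem_singleton_iff,
    Set.mem_setOf_eq, aff_eq_one_iff]
  constructor
  · rintro ⟨h1, h2⟩
    exact ⟨h1, fun hl => h2 ⟨hl, h1⟩⟩
  · rintro ⟨h1, h2⟩
    exact ⟨h1, fun h => h2 h.1⟩

lemma conj_right (c x : AffineGroup F) : (c * x * c⁻¹).right = x.right := by
  rw [SemidirectProduct.mul_right, SemidirectProduct.mul_right, SemidirectProduct.inv_right,
    mul_comm c.right x.right, mul_inv_cancel_right]

lemma conj_left_toAdd (c x : AffineGroup F) :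
    ((c * x * c⁻¹).left).toAdd
      = c.left.toAdd + (c.right : F) * x.left.toAdd - (x.right : F) * c.left.toAdd := by
  rw [SemidirectProduct.mul_left, SemidirectProduct.mul_left, SemidirectProduct.inv_left,
    SemidirectProduct.mul_right, affineAction_comp,
    show c.right * x.right * c.right⁻¹ = x.right by
      rw [mul_comm c.right x.right, mul_inv_cancel_right],
    affineAction_apply, affineAction_apply]
  simp only [toAdd_mul, toAdd_ofAdd, toAdd_inv]
  ring

lemma units_val_ne_one {b : Fˣ} (h : b ≠ 1) : (b : F) ≠ 1 := by
  intro hb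
  exact h (Units.ext (by rw [hb, Units.val_one]))

lemma isConj_affine_iff {x y : AffineGroup F} :
    IsConj x y ↔ y.right = x.right ∧ (x.right = 1 → (x.left = 1 ↔ y.left = 1)) := by
  rw [isConj_iff]
  constructor
  · rintro ⟨c, rfl⟩
    refine ⟨conj_right c x, fun h1 => ?_⟩
    have h2 := conj_left_toAdd c x
    rw [h1] at h2
    have ha : (c.right : F) ≠ 0 := Units.ne_zero _
    rw [← toAdd_eq_zero, ← toAdd_eq_zero (x := (c * x * c⁻¹).left), h2]
    simp only [Units.val_one, one_mul]
    constructor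
    · intro h; rw [h]; ring
    · intro h
      have : (c.right : F) * x.left.toAdd = 0 := by linear_combination h
      rcases mul_eq_zero.mp this with h' | h'
      · exact absurd h' ha
      · exact h'
  · rintro ⟨h1, h2⟩
    by_cases hx1 : x.right = 1
    · have hy1 : y.right = 1 := h1.trans hx1
      by_cases hxl : x.left = 1
      · refine ⟨1, ?_⟩
        have hx : x = 1 := (aff_eq_one_iff x).2 ⟨hxl, hx1⟩
        have hy : y = 1 := (aff_eq_one_iff y).2 ⟨(h2 hx1).1 hxl, hy1⟩
        rw [hx, hy]; group
      · have hyl : y.left ≠ 1 := fun h => hxl ((h2 hx1).2 h)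
        have hxl' : x.left.toAdd ≠ 0 := fun h => hxl (toAdd_eq_zero.mp h)
        have hyl' : y.left.toAdd ≠ 0 := fun h => hyl (toAdd_eq_zero.mp h)
        refine ⟨⟨1, Units.mk0 (y.left.toAdd * x.left.toAdd⁻¹)
          (mul_ne_zero hyl' (inv_ne_zero hxl'))⟩, ?_⟩
        refine SemidirectProduct.ext ?_ ?_
        · apply Multiplicative.toAdd.injective
          rw [conj_left_toAdd]
          show (Multiplicative.ofAdd (0:F)).toAdd + _ * x.left.toAdd
              - (x.right : F) * (Multiplicative.ofAdd (0:F)).toAdd = _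
          rw [toAdd_ofAdd, Units.val_mk0]
          field_simp
          ring
        · rw [conj_right, h1]
    · refine ⟨⟨Multiplicative.ofAdd
        (((1 : F) - (x.right : F))⁻¹ * (y.left.toAdd - x.left.toAdd)), 1⟩, ?_⟩
      have hb : (1 : F) - (x.right : F) ≠ 0 := by
        intro h
        exact units_val_ne_one hx1 (by linear_combination -h)
      refine SemidirectProduct.ext ?_ ?_
      · apply Multiplicative.toAdd.injective
        rw [conj_left_toAdd]
        show (Multiplicative.ofAdd (((1 : F) - (x.right : F))⁻¹
            * (y.left.toAdd - x.left.toAdd))).toAdd + ((1 : Fˣ) : F) * x.left.toAdd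
            - (x.right : F) * (Multiplicative.ofAdd (((1 : F) - (x.right : F))⁻¹
            * (y.left.toAdd - x.left.toAdd))).toAdd = y.left.toAdd
        rw [toAdd_ofAdd, Units.val_one]
        field_simp
        ring
      · rw [conj_right, h1]

lemma carrier_cases (D : ConjClasses (AffineGroup F)) :
    D.carrier = {1}
      ∨ D.carrier = {z : AffineGroup F | z.right = 1 ∧ z.left ≠ 1}
      ∨ ∃ a : Fˣ, a ≠ 1 ∧ D.carrier = {z : AffineGroup F | z.right = a} := by
  obtain ⟨d, rfl⟩ := ConjClasses.exists_rep D
  by_cases h1 : d.right = 1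
  · by_cases h2 : d.left = 1
    · left
      ext z
      rw [ConjClasses.mem_carrier_iff_mk_eq, ConjClasses.mk_eq_mk_iff_isConj,
        isConj_affine_iff, Set.mem_singleton_iff, aff_eq_one_iff]
      constructor
      · rintro ⟨hr, himp⟩
        have hz1 : z.right = 1 := hr.symm.trans h1
        exact ⟨(himp hz1).2 h2, hz1⟩
      · rintro ⟨hl, hr⟩
        exact ⟨h1.trans hr.symm, fun _ => iff_of_true hl h2⟩
    · right; left
      ext z
      rw [ConjClasses.mem_carrier_iff_mk_eq, ConjClasses.mk_eq_mk_iff_isConj,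
        isConj_affine_iff, Set.mem_setOf_eq]
      constructor
      · rintro ⟨hr, himp⟩
        have hz1 : z.right = 1 := hr.symm.trans h1
        exact ⟨hz1, fun hl => h2 ((himp hz1).1 hl)⟩
      · rintro ⟨hz1, hzl⟩
        exact ⟨h1.trans hz1.symm, fun _ => iff_of_false hzl h2⟩
  · right; right
    refine ⟨d.right, h1, ?_⟩
    ext z
    rw [ConjClasses.mem_carrier_iff_mk_eq, ConjClasses.mk_eq_mk_iff_isConj,
      isConj_affine_iff, Set.mem_setOf_eq]
    constructor
    · rintro ⟨hr, _⟩
      exact hr.symm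
    · intro hzr
      exact ⟨hzr.symm, fun hz1 => absurd (hzr.symm.trans hz1) h1⟩

open Classical in
lemma sum_right_fiber (b : Fˣ) :
    ∑ z : AffineGroup F, (if z.right = b then (1 : ℂ) else 0) = (Fintype.card F : ℂ) := by
  rw [← Equiv.sum_comp
    (sdpEquivProd (N := Multiplicative F) (G := Fˣ) (φ := affineAction F)).symm
    (fun z : AffineGroup F => if z.right = b then (1 : ℂ) else 0)]
  have hpt : ∀ p : Multiplicative F × Fˣ,
      ((sdpEquivProd (N := Multiplicative F) (G := Fˣ)
        (φ := affineAction F)).symm p).right = p.2 := fun _ => rfl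
  simp only [hpt]
  rw [Fintype.sum_prod_type]
  have : ∀ m : Multiplicative F,
      (∑ b' : Fˣ, if b' = b then (1 : ℂ) else 0) = 1 := by
    intro m
    rw [Finset.sum_ite_eq' Finset.univ b (fun _ => (1 : ℂ))]
    simp
  rw [Finset.sum_congr rfl fun m _ => this m]
  simp

end Aux

/-- Let `C` be a conjugacy class of the affine group `G_q = F ⋊ Fˣ` with `|C| ≥ 2`, and let
`D` be any conjugacy class. Then `A_D · B_C = B_C` if `D = {1}`; `A_D · B_C = -B_C` if
`D = N ∖ {1}` where `N` is the translation subgroup; and `A_D · B_C = 0` otherwise. -/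
theorem affineGroup_AMat_mul_BMat (q : ℕ) (hq : IsPrimePow q)
    (F : Type*) [Field F] [Fintype F] [DecidableEq F] (hF : Fintype.card F = q)
    (C : ConjClasses (AffineGroup F)) (hC : 2 ≤ C.carrier.ncard)
    (D : ConjClasses (AffineGroup F)) :
    (D.carrier = {(1 : AffineGroup F)} →
      AMat (AffineGroup F) D * BMat (AffineGroup F) C = BMat (AffineGroup F) C) ∧
    (D.carrier = (translationSubgroup F : Set (AffineGroup F)) \ {1} →
      AMat (AffineGroup F) D * BMat (AffineGroup F) C = -BMat (AffineGroup F) C) ∧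
    (D.carrier ≠ {(1 : AffineGroup F)} →
      D.carrier ≠ (translationSubgroup F : Set (AffineGroup F)) \ {1} →
      AMat (AffineGroup F) D * BMat (AffineGroup F) C = 0) := by
  classical
  have hk1 : ((C.carrier.ncard : ℂ) - 1) ≠ 0 := by
    have h2 : C.carrier.ncard ≠ 1 := by omega
    intro h
    exact h2 (by exact_mod_cast sub_eq_zero.mp h)
  obtain ⟨r₀, hCr⟩ : ∃ r₀ : Fˣ, ∀ z ∈ C.carrier, z.right = r₀ := by
    obtain h | h | ⟨a, _, h⟩ := carrier_cases C
    · exfalso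
      rw [h, Set.ncard_singleton] at hC
      omega
    · exact ⟨1, fun z hz => by rw [h] at hz; exact hz.1⟩
    · exact ⟨a, fun z hz => by rw [h] at hz; exact hz⟩
  refine ⟨?_, ?_, ?_⟩
  · -- Part 1 : D = {1}
    intro h1
    have hA : AMat (AffineGroup F) D = 1 := by
      ext x z
      rw [AMat_apply, Matrix.one_apply, h1]
      simp only [Set.mem_singleton_iff, mul_inv_eq_one]
      by_cases h : z = x
      · rw [if_pos h, if_pos h.symm]
      · rw [if_neg h, if_neg (fun e => h e.symm)]
    rw [hA, one_mul]
  · -- Part 2 : D = N \ {1}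
    intro h2
    have memD : ∀ z x : AffineGroup F,
        z * x⁻¹ ∈ D.carrier ↔ z.right = x.right ∧ z ≠ x := by
      intro z x
      rw [h2, translation_diff, Set.mem_setOf_eq, SemidirectProduct.mul_right,
        SemidirectProduct.inv_right, mul_inv_eq_one]
      constructor
      · rintro ⟨h, hl⟩
        refine ⟨h, fun e => hl ?_⟩
        subst e
        rw [mul_inv_cancel]
        rfl
      · rintro ⟨h, hne⟩
        refine ⟨h, fun hl => hne ?_⟩
        refine mul_inv_eq_one.mp ((aff_eq_one_iff _).2 ⟨hl, ?_⟩)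
        rw [SemidirectProduct.mul_right, SemidirectProduct.inv_right, mul_inv_eq_one]
        exact h
    ext x y
    rw [Matrix.neg_apply]
    by_cases hy : y ∈ C.carrier
    · rw [entry_formula C D hy]
      by_cases hx : x.right = r₀
      · have hS : (∑ z : AffineGroup F,
            if z ∈ C.carrier ∧ z * x⁻¹ ∈ D.carrier then (1 : ℂ) else 0)
            = (C.carrier.ncard : ℂ) - (if x ∈ C.carrier then 1 else 0) := by
          have hcond : ∀ z : AffineGroup F,
              (z ∈ C.carrier ∧ z * x⁻¹ ∈ D.carrier) ↔ ((fun w => w ∈ C.carrier) z ∧ z ≠ x) := by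
            intro z
            simp only [memD]
            constructor
            · rintro ⟨hzc, _, hne⟩; exact ⟨hzc, hne⟩
            · rintro ⟨hzc, hne⟩; exact ⟨hzc, (hCr z hzc).trans hx.symm, hne⟩
          simp only [hcond]
          rw [eq_sub_iff_add_eq, ← sum_ite_split (fun w => w ∈ C.carrier) x,
            sum_ite_mem_ncard]
        rw [hS]
        by_cases hxC : x ∈ C.carrier
        · rw [if_pos hxC]
          by_cases hxy : y = x
          · subst hxy
            rw [if_neg (fun hd => ((memD _ _).1 hd).2 rfl), BMat_apply_self C hxC]
            field_simp
            ring
          · rw [if_pos ((memD y x).2 ⟨(hCr y hy).trans hx.symm, hxy⟩),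
              BMat_apply_ne C hxC hy (fun e => hxy e.symm)]
            field_simp
            ring
        · rw [if_neg hxC, BMat_apply_of_not_mem_left C hxC y,
            if_pos ((memD y x).2 ⟨(hCr y hy).trans hx.symm, fun e => hxC (e ▸ hy)⟩)]
          field_simp
          ring
      · have hxC : x ∉ C.carrier := fun h => hx (hCr x h)
        have hS : (∑ z : AffineGroup F,
            if z ∈ C.carrier ∧ z * x⁻¹ ∈ D.carrier then (1 : ℂ) else 0) = 0 := by
          refine Finset.sum_eq_zero fun z _ => ?_
          rw [if_neg]
          rintro ⟨hzc, hd⟩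
          exact hx ((((memD z x).1 hd).1).symm.trans (hCr z hzc))
        rw [hS, if_neg (fun hd => hx ((((memD y x).1 hd).1).symm.trans (hCr y hy))),
          BMat_apply_of_not_mem_left C hxC y]
        ring
    · rw [AMat_mul_BMat_apply, Finset.sum_eq_zero
        (fun z _ => by rw [BMat_apply_of_not_mem_right C hy z, mul_zero]),
        BMat_apply_of_not_mem_right C hy x]
      ring
  · -- Part 3 : other classes
    intro h1 h2
    obtain ⟨a, ha, hD⟩ : ∃ a : Fˣ, a ≠ 1
        ∧ D.carrier = {z : AffineGroup F | z.right = a} := by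
      obtain h | h | h := carrier_cases D
      · exact absurd h h1
      · exact absurd (h.trans translation_diff.symm) h2
      · exact h
    have memD : ∀ z x : AffineGroup F, z * x⁻¹ ∈ D.carrier ↔ z.right = a * x.right := by
      intro z x
      rw [hD, Set.mem_setOf_eq, SemidirectProduct.mul_right, SemidirectProduct.inv_right]
      constructor
      · intro h; rw [← h, inv_mul_cancel_right]
      · intro h; rw [h, mul_inv_cancel_right]
    ext x y
    rw [Matrix.zero_apply]
    by_cases hy : y ∈ C.carrier
    · rw [entry_formula C D hy]
      by_cases h : r₀ = a * x.right
      · have hS : (∑ z : AffineGroup F,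
            if z ∈ C.carrier ∧ z * x⁻¹ ∈ D.carrier then (1 : ℂ) else 0)
            = (C.carrier.ncard : ℂ) := by
          have hcond : ∀ z : AffineGroup F,
              (z ∈ C.carrier ∧ z * x⁻¹ ∈ D.carrier) ↔ z ∈ C.carrier := by
            intro z
            simp only [memD]
            constructor
            · rintro ⟨hzc, _⟩; exact hzc
            · intro hzc; exact ⟨hzc, (hCr z hzc).trans h⟩
          simp only [hcond]
          rw [sum_ite_mem_ncard]
        rw [hS, if_pos ((memD y x).2 ((hCr y hy).trans h))]
        field_simp
        ring
      · have hS : (∑ z : AffineGroup F,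
            if z ∈ C.carrier ∧ z * x⁻¹ ∈ D.carrier then (1 : ℂ) else 0) = 0 := by
          refine Finset.sum_eq_zero fun z _ => ?_
          rw [if_neg]
          rintro ⟨hzc, hd⟩
          exact h ((hCr z hzc).symm.trans ((memD z x).1 hd))
        rw [hS, if_neg (fun hd => h ((hCr y hy).symm.trans ((memD y x).1 hd)))]
        ring
    · rw [AMat_mul_BMat_apply, Finset.sum_eq_zero
        (fun z _ => by rw [BMat_apply_of_not_mem_right C hy z, mul_zero])]
end

section
/- Let q be a prime power and let C be a conjugacy class of the affine group G_q = F ⋊ Fˣ with |C| ≥ 2. Then B_C² = (|C|/(|C|−1))·B_C; consequently ((|C|−1)/|C|)·B_C is an idempotent element of the Terwilliger algebra T(G_q) spanning a one-dimensional two-sided ideal of T(G_q). -/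
set_option linter.unusedSectionVars false
open scoped Classical

section Generic
variable {G : Type*} [Group G] [Fintype G] [DecidableEq G]

variable (C : ConjClasses G)

lemma BMat_apply_of_not_left {x y : G} (hx : x ∉ C.carrier) : BMat G C x y = 0 := by
  simp only [BMat, Matrix.of_apply]
  split_ifs with h1 h2
  · exact absurd (h1.1 ▸ h1.2) hx
  · exact absurd h2.1 hx
  · rfl

lemma BMat_apply_of_not_right {x y : G} (hy : y ∉ C.carrier) : BMat G C x y = 0 := by
  simp only [BMat, Matrix.of_apply]
  split_ifs with h1 h2
  · exact absurd (h1.1 ▸ h1.2) hy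
  · exact absurd h2.2 hy
  · rfl

lemma BMat_symm (x y : G) : BMat G C x y = BMat G C y x := by
  simp only [BMat, Matrix.of_apply]
  by_cases hxy : x = y
  · subst hxy; rfl
  · rw [if_neg (fun h => hxy h.1), if_neg (fun (h : y = x ∧ _) => hxy h.1.symm)]
    exact if_congr and_comm rfl rfl

lemma BMat_diag {x : G} (hx : x ∈ C.carrier) : BMat G C x x = 1 := by
  simp [BMat, hx]

lemma BMat_off {x y : G} (hx : x ∈ C.carrier) (hy : y ∈ C.carrier) (hxy : x ≠ y) :
    BMat G C x y = -1 / ((C.carrier.ncard : ℂ) - 1) := by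
  simp only [BMat, Matrix.of_apply]
  rw [if_neg (fun h => hxy h.1), if_pos ⟨hx, hy⟩]

lemma sum_BMat_col {y : G} (hy : y ∈ C.carrier) (hC : 2 ≤ C.carrier.ncard) :
    ∑ z ∈ C.carrier.toFinset, BMat G C z y = 0 := by
  have hcard : C.carrier.toFinset.card = C.carrier.ncard := (Set.ncard_eq_toFinset_card' _).symm
  have hyF : y ∈ C.carrier.toFinset := Set.mem_toFinset.2 hy
  rw [← Finset.add_sum_erase _ _ hyF, BMat_diag C hy]
  have : ∀ z ∈ C.carrier.toFinset.erase y, BMat G C z y = -1 / ((C.carrier.ncard : ℂ) - 1) := by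
    intro z hz
    exact BMat_off C (Set.mem_toFinset.1 (Finset.mem_of_mem_erase hz)) hy
      (Finset.ne_of_mem_erase hz)
  rw [Finset.sum_congr rfl this, Finset.sum_const, Finset.card_erase_of_mem hyF, hcard]
  have hk : ((C.carrier.ncard : ℂ) - 1) ≠ 0 := by
    have : (C.carrier.ncard : ℂ) ≠ 1 := by
      intro h
      have := Nat.cast_injective (R := ℂ) (h.trans (Nat.cast_one).symm)
      omega
    exact sub_ne_zero.2 this
  have hcast : ((C.carrier.ncard - 1 : ℕ) : ℂ) = (C.carrier.ncard : ℂ) - 1 := by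
    have : 1 ≤ C.carrier.ncard := le_trans (by norm_num) hC
    push_cast [this]; ring
  rw [nsmul_eq_mul, hcast]
  field_simp
  norm_num

lemma sum_BMat_erase {x y : G} (hx : x ∈ C.carrier) (hy : y ∈ C.carrier)
    (hC : 2 ≤ C.carrier.ncard) :
    ∑ z ∈ C.carrier.toFinset.erase x, BMat G C z y = - BMat G C x y := by
  have hxF : x ∈ C.carrier.toFinset := Set.mem_toFinset.2 hx
  have := sum_BMat_col C hy hC
  rw [← Finset.add_sum_erase _ _ hxF] at this
  linear_combination this
end Generic

section Generic2
variable {G : Type*} [Group G] [Fintype G] [DecidableEq G] (C : ConjClasses G)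

lemma ncard_sub_one_ne (hC : 2 ≤ C.carrier.ncard) : ((C.carrier.ncard : ℂ) - 1) ≠ 0 := by
  refine sub_ne_zero.2 fun h => ?_
  have := Nat.cast_injective (R := ℂ) (h.trans (Nat.cast_one).symm)
  omega

lemma ncard_cast_ne (hC : 2 ≤ C.carrier.ncard) : (C.carrier.ncard : ℂ) ≠ 0 :=
  Nat.cast_ne_zero.2 (by omega)

lemma mul_BMat_apply (D : ConjClasses G) (x y : G) :
    (AMat G D * BMat G C) x y
      = ∑ z ∈ C.carrier.toFinset, (if z * x⁻¹ ∈ D.carrier then BMat G C z y else 0) := by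
  have h0 : ∀ z ∈ (Finset.univ : Finset G), z ∉ C.carrier.toFinset →
      AMat G D x z * BMat G C z y = 0 := fun z _ hz => by
    rw [BMat_apply_of_not_left C (fun h => hz (Set.mem_toFinset.2 h)), mul_zero]
  rw [Matrix.mul_apply, ← Finset.sum_subset (Finset.subset_univ _) h0]
  exact Finset.sum_congr rfl fun z _ => by
    simp only [AMat, Matrix.of_apply, ite_mul, one_mul, zero_mul]

lemma BMat_sq (hC : 2 ≤ C.carrier.ncard) :
    BMat G C * BMat G C
      = ((C.carrier.ncard : ℂ) / ((C.carrier.ncard : ℂ) - 1)) • BMat G C := by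
  have hk1 := ncard_sub_one_ne C hC
  ext x y
  rw [Matrix.mul_apply, Matrix.smul_apply, smul_eq_mul]
  by_cases hx : x ∈ C.carrier
  · by_cases hy : y ∈ C.carrier
    · have h0 : ∀ z ∈ (Finset.univ : Finset G), z ∉ C.carrier.toFinset →
          BMat G C x z * BMat G C z y = 0 := fun z _ hz => by
        rw [BMat_apply_of_not_right C (fun h => hz (Set.mem_toFinset.2 h)), zero_mul]
      rw [← Finset.sum_subset (Finset.subset_univ _) h0,
        ← Finset.add_sum_erase _ _ (Set.mem_toFinset.2 hx), BMat_diag C hx, one_mul]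
      have he : ∀ z ∈ C.carrier.toFinset.erase x,
          BMat G C x z * BMat G C z y
            = -1 / ((C.carrier.ncard : ℂ) - 1) * BMat G C z y := fun z hz => by
        rw [BMat_symm C x z, BMat_off C (Set.mem_toFinset.1 (Finset.mem_of_mem_erase hz)) hx
          (Finset.ne_of_mem_erase hz)]
      rw [Finset.sum_congr rfl he, ← Finset.mul_sum, sum_BMat_erase C hx hy hC]
      field_simp
      ring
    · rw [BMat_apply_of_not_right C hy, mul_zero, Finset.sum_eq_zero]
      exact fun z _ => by rw [BMat_apply_of_not_right C hy, mul_zero]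
  · rw [BMat_apply_of_not_left C hx, mul_zero, Finset.sum_eq_zero]
    exact fun z _ => by rw [BMat_apply_of_not_left C hx, zero_mul]

end Generic2

section Generic3
variable {G : Type*} [Group G] [Fintype G] [DecidableEq G] (C : ConjClasses G)

lemma carrier_disjoint {D : ConjClasses G} (hDC : D ≠ C) {x : G}
    (hx : x ∈ D.carrier) : x ∉ C.carrier := fun h =>
  hDC ((ConjClasses.mem_carrier_iff_mk_eq.1 hx).symm.trans (ConjClasses.mem_carrier_iff_mk_eq.1 h))

lemma EMat_mul_BMat (D : ConjClasses G) :
    ∃ l : ℂ, EMat G D * BMat G C = l • BMat G C := by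
  by_cases hDC : D = C
  · subst hDC
    refine ⟨1, ?_⟩
    ext x y
    rw [Matrix.mul_apply, one_smul]
    rw [Finset.sum_eq_single x (fun z _ hz => by
      rw [show EMat G D x z = 0 from if_neg (fun h => hz h.1.symm), zero_mul])
      (fun h => absurd (Finset.mem_univ x) h)]
    by_cases hx : x ∈ D.carrier
    · simp [EMat, hx]
    · rw [BMat_apply_of_not_left D hx, mul_zero]
  · refine ⟨0, ?_⟩
    ext x y
    rw [Matrix.mul_apply, zero_smul, Matrix.zero_apply, Finset.sum_eq_zero]
    intro z _
    by_cases h : x = z ∧ z ∈ D.carrier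
    · rw [BMat_apply_of_not_left C (carrier_disjoint C hDC h.2), mul_zero]
    · rw [show EMat G D x z = 0 by simp only [EMat, Matrix.of_apply, if_neg h], zero_mul]

lemma BMat_mul_EMat (D : ConjClasses G) :
    ∃ l : ℂ, BMat G C * EMat G D = l • BMat G C := by
  by_cases hDC : D = C
  · subst hDC
    refine ⟨1, ?_⟩
    ext x y
    rw [Matrix.mul_apply, one_smul]
    rw [Finset.sum_eq_single y (fun z _ hz => by
      rw [show EMat G D z y = 0 from if_neg (fun h => hz h.1), mul_zero])
      (fun h => absurd (Finset.mem_univ y) h)]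
    by_cases hy : y ∈ D.carrier
    · simp [EMat, hy]
    · rw [BMat_apply_of_not_right D hy, zero_mul]
  · refine ⟨0, ?_⟩
    ext x y
    rw [Matrix.mul_apply, zero_smul, Matrix.zero_apply, Finset.sum_eq_zero]
    intro z _
    by_cases h : z = y ∧ y ∈ D.carrier
    · obtain ⟨rfl, hy2⟩ := h
      rw [BMat_apply_of_not_right C (carrier_disjoint C hDC hy2), zero_mul]
    · rw [show EMat G D z y = 0 by simp only [EMat, Matrix.of_apply, if_neg h], mul_zero]

lemma AMat_transpose (D : ConjClasses G) : ∃ D' : ConjClasses G,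
    (AMat G D).transpose = AMat G D' := by
  obtain ⟨g, rfl⟩ := ConjClasses.exists_rep D
  refine ⟨ConjClasses.mk g⁻¹, ?_⟩
  ext x y
  rw [Matrix.transpose_apply]
  simp only [AMat, Matrix.of_apply]
  congr 1
  simp only [ConjClasses.mem_carrier_iff_mk_eq, eq_iff_iff, ConjClasses.mk_eq_mk_iff_isConj]
  have inv_conj : ∀ {a b : G}, IsConj a b → IsConj a⁻¹ b⁻¹ := by
    intro a b h
    obtain ⟨c, hc⟩ := isConj_iff.1 h
    exact isConj_iff.2 ⟨c, by rw [← hc]; group⟩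
  constructor
  · intro h
    simpa using inv_conj h
  · intro h
    simpa using inv_conj h

lemma sum_AMat : ∑ D : ConjClasses G, AMat G D = Matrix.of (fun _ _ => (1 : ℂ)) := by
  ext x y
  rw [Matrix.sum_apply]
  simp only [AMat, Matrix.of_apply, ConjClasses.mem_carrier_iff_mk_eq]
  rw [Finset.sum_ite_eq (Finset.univ) (ConjClasses.mk (y * x⁻¹)) (fun _ => (1:ℂ))]
  simp

lemma EMat_J_EMat :
    EMat G C * Matrix.of (fun _ _ => (1 : ℂ)) * EMat G C
      = Matrix.of (fun x y => if x ∈ C.carrier ∧ y ∈ C.carrier then (1 : ℂ) else 0) := by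
  ext x y
  rw [Matrix.mul_apply]
  rw [Finset.sum_eq_single y (fun z _ hz => by
    rw [show EMat G C z y = 0 from if_neg (fun h => hz h.1), mul_zero])
    (fun h => absurd (Finset.mem_univ y) h)]
  rw [Matrix.mul_apply]
  rw [Finset.sum_eq_single x (fun z _ hz => by
    rw [show EMat G C x z = 0 from if_neg (fun h => hz h.1.symm), zero_mul])
    (fun h => absurd (Finset.mem_univ x) h)]
  by_cases hx : x ∈ C.carrier <;> by_cases hy : y ∈ C.carrier <;>
    simp [EMat, hx, hy]

lemma BMat_decomp (hC : 2 ≤ C.carrier.ncard) :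
    BMat G C = ((C.carrier.ncard : ℂ) / ((C.carrier.ncard : ℂ) - 1)) • EMat G C
      - (1 / ((C.carrier.ncard : ℂ) - 1)) •
          (EMat G C * Matrix.of (fun _ _ => (1 : ℂ)) * EMat G C) := by
  have hk1 := ncard_sub_one_ne C hC
  rw [EMat_J_EMat]
  ext x y
  simp only [BMat, EMat, Matrix.sub_apply, Matrix.smul_apply, Matrix.of_apply, smul_eq_mul]
  by_cases hxy : x = y
  · subst hxy
    by_cases hx : x ∈ C.carrier
    · simp only [hx, and_self, if_true]
      field_simp
    · simp [hx]
  · rw [if_neg (fun h => hxy h.1), if_neg (fun (h : x = y ∧ y ∈ C.carrier) => hxy h.1)]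
    by_cases h2 : x ∈ C.carrier ∧ y ∈ C.carrier
    · rw [if_pos h2, if_pos h2]
      field_simp
      ring
    · rw [if_neg h2, if_neg h2]
      simp

lemma BMat_mem (hC : 2 ≤ C.carrier.ncard) :
    BMat G C ∈ Algebra.adjoin ℂ (Set.range (AMat G) ∪ Set.range (EMat G)) := by
  have hE : EMat G C ∈ Algebra.adjoin ℂ (Set.range (AMat G) ∪ Set.range (EMat G)) :=
    Algebra.subset_adjoin (Or.inr ⟨C, rfl⟩)
  have hJ : Matrix.of (fun _ _ => (1 : ℂ)) ∈
      Algebra.adjoin ℂ (Set.range (AMat G) ∪ Set.range (EMat G)) := by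
    rw [← sum_AMat]
    exact Subalgebra.sum_mem _ fun D _ => Algebra.subset_adjoin (Or.inl ⟨D, rfl⟩)
  rw [BMat_decomp C hC]
  exact Subalgebra.sub_mem _ (Subalgebra.smul_mem _ hE _)
    (Subalgebra.smul_mem _ (Subalgebra.mul_mem _ (Subalgebra.mul_mem _ hE hJ) hE) _)

end Generic3

section Affine
variable {F : Type*} [Field F]

@[simp] lemma affine_apply (a : Fˣ) (b : Multiplicative F) :
    ((affineAction F a) b).toAdd = (a : F) * b.toAdd := rfl

lemma conj_rightAux (g x : AffineGroup F) : (g * x * g⁻¹).right = x.right := by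
  simp [SemidirectProduct.mul_right, SemidirectProduct.inv_right]

lemma conj_leftAux (g x : AffineGroup F) :
    ((g * x * g⁻¹).left).toAdd
      = (1 - (x.right : F)) * (g.left).toAdd + (g.right : F) * (x.left).toAdd := by
  simp only [SemidirectProduct.mul_left, SemidirectProduct.inv_left,
    SemidirectProduct.mul_right, toAdd_mul, affine_apply, toAdd_inv,
    Units.val_mul, Units.val_inv_eq_inv_val]
  field_simp
  ring

lemma sdp_eq_iff (a b : AffineGroup F) :
    a = b ↔ a.left.toAdd = b.left.toAdd ∧ a.right = b.right := by
  constructor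
  · rintro rfl; exact ⟨rfl, rfl⟩
  · rintro ⟨h1, h2⟩
    cases a; cases b
    simp only at h1 h2
    simp [SemidirectProduct.ext_iff, h2, Multiplicative.toAdd.injective h1]

lemma sdp_one_left : ((1 : AffineGroup F).left).toAdd = 0 := rfl
lemma sdp_one_right : (1 : AffineGroup F).right = 1 := rfl

lemma classify (E : ConjClasses (AffineGroup F)) :
    E.carrier = {1} ∨
    (∃ s : Fˣ, s ≠ 1 ∧ E.carrier = {h : AffineGroup F | h.right = s}) ∨
    E.carrier = {h : AffineGroup F | h.right = 1 ∧ h ≠ 1} := by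
  obtain ⟨g, rfl⟩ := ConjClasses.exists_rep E
  by_cases hs : g.right = 1
  · by_cases hb : g.left.toAdd = 0
    · left
      have hg : g = 1 := (sdp_eq_iff g 1).2 ⟨hb, hs⟩
      subst hg
      ext h
      simp only [ConjClasses.mem_carrier_iff_mk_eq, ConjClasses.mk_eq_mk_iff_isConj,
        Set.mem_singleton_iff]
      exact isConj_one_left
    · right; right
      ext h
      simp only [ConjClasses.mem_carrier_iff_mk_eq, ConjClasses.mk_eq_mk_iff_isConj,
        Set.mem_setOf_eq]
      constructor
      · intro hconj
        obtain ⟨c, hc⟩ := isConj_iff.1 hconj.symm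
        constructor
        · rw [← hc, conj_rightAux, hs]
        · intro h1
          apply hb
          rw [h1] at hc
          have hg1 : g = c⁻¹ * (c * g * c⁻¹) * c := by group
          rw [hc] at hg1
          simp at hg1
          rw [hg1, sdp_one_left]
      · rintro ⟨h1, h2⟩
        have hl : h.left.toAdd ≠ 0 := by
          intro hl
          exact h2 ((sdp_eq_iff h 1).2 ⟨hl, h1⟩)
        refine (isConj_iff.2 ⟨⟨1, Units.mk0 (h.left.toAdd / g.left.toAdd)
          (div_ne_zero hl hb)⟩, ?_⟩).symm
        rw [sdp_eq_iff]
        refine ⟨?_, by rw [conj_rightAux, hs, h1]⟩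
        rw [conj_leftAux]
        simp only [hs, Units.val_one, toAdd_one, Units.val_mk0]
        field_simp
        ring
  · right; left
    refine ⟨g.right, hs, ?_⟩
    ext h
    simp only [ConjClasses.mem_carrier_iff_mk_eq, ConjClasses.mk_eq_mk_iff_isConj,
      Set.mem_setOf_eq]
    constructor
    · intro hconj
      obtain ⟨c, hc⟩ := isConj_iff.1 hconj.symm
      rw [← hc, conj_rightAux]
    · intro h1
      have hs' : (1 : F) - (g.right : F) ≠ 0 := by
        intro h0
        refine hs (Units.ext ?_)
        rw [Units.val_one]
        linear_combination -(sub_eq_zero.1 h0)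
      refine (isConj_iff.2 ⟨⟨Multiplicative.ofAdd
        ((h.left.toAdd - g.left.toAdd) / (1 - (g.right : F))), 1⟩, ?_⟩).symm
      rw [sdp_eq_iff]
      refine ⟨?_, by rw [conj_rightAux, h1]⟩
      rw [conj_leftAux]
      simp only [Units.val_one, toAdd_ofAdd, one_mul]
      show (1 - (g.right : F)) * ((h.left.toAdd - g.left.toAdd) / (1 - (g.right : F)))
          + g.left.toAdd = h.left.toAdd
      field_simp
      ring

end Affine

section Generic4
variable {G : Type*} [Group G] [Fintype G] [DecidableEq G] (C : ConjClasses G)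

lemma sum_ite_none {y : G} (cond : G → Prop)
    (h1 : ∀ z ∈ C.carrier, ¬ cond z) :
    ∑ z ∈ C.carrier.toFinset, (if cond z then BMat G C z y else 0) = 0 :=
  Finset.sum_eq_zero fun z hz => if_neg (h1 z (Set.mem_toFinset.1 hz))

lemma sum_ite_all {y : G} (hy : y ∈ C.carrier) (hC : 2 ≤ C.carrier.ncard) (cond : G → Prop)
    (h1 : ∀ z ∈ C.carrier, cond z) :
    ∑ z ∈ C.carrier.toFinset, (if cond z then BMat G C z y else 0) = 0 := by
  rw [Finset.sum_congr rfl fun z hz => if_pos (h1 z (Set.mem_toFinset.1 hz))]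
  exact sum_BMat_col C hy hC

lemma sum_ite_ne {x y : G} (hx : x ∈ C.carrier) (hy : y ∈ C.carrier)
    (hC : 2 ≤ C.carrier.ncard) (cond : G → Prop)
    (h1 : ∀ z ∈ C.carrier, (cond z ↔ z ≠ x)) :
    ∑ z ∈ C.carrier.toFinset, (if cond z then BMat G C z y else 0) = - BMat G C x y := by
  rw [← Finset.add_sum_erase _ _ (Set.mem_toFinset.2 hx),
    if_neg (fun h => ((h1 x hx).1 h) rfl), zero_add,
    Finset.sum_congr rfl fun z hz => if_pos
      ((h1 z (Set.mem_toFinset.1 (Finset.mem_of_mem_erase hz))).2 (Finset.ne_of_mem_erase hz))]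
  exact sum_BMat_erase C hx hy hC

lemma sum_ite_zero_col {y : G} (hy : y ∉ C.carrier) (cond : G → Prop) :
    ∑ z ∈ C.carrier.toFinset, (if cond z then BMat G C z y else 0) = 0 :=
  Finset.sum_eq_zero fun z _ => by
    rw [BMat_apply_of_not_right C hy]
    exact ite_self 0

lemma AMat_of_singleton {D : ConjClasses G} (hD : D.carrier = {1}) :
    AMat G D = 1 := by
  ext x y
  simp [AMat, hD, Matrix.one_apply, mul_inv_eq_one, eq_comm]

end Generic4

section AffineEigen
variable {F : Type*} [Field F] [Fintype F] [DecidableEq F]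

lemma mem_fiber_iff (c : Fˣ) (z x : AffineGroup F) :
    z * x⁻¹ ∈ {h : AffineGroup F | h.right = c} ↔ z.right = c * x.right := by
  simp only [Set.mem_setOf_eq, SemidirectProduct.mul_right, SemidirectProduct.inv_right]
  exact mul_inv_eq_iff_eq_mul

lemma mem_tr_iff (z x : AffineGroup F) :
    z * x⁻¹ ∈ {h : AffineGroup F | h.right = 1 ∧ h ≠ 1} ↔ z.right = x.right ∧ z ≠ x := by
  simp only [Set.mem_setOf_eq, SemidirectProduct.mul_right, SemidirectProduct.inv_right,
    ne_eq, mul_inv_eq_one]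

lemma eigen {C D : ConjClasses (AffineGroup F)} (hC : 2 ≤ C.carrier.ncard) :
    ∃ l : ℂ, AMat (AffineGroup F) D * BMat (AffineGroup F) C
      = l • BMat (AffineGroup F) C := by
  have hCne : C.carrier ≠ {1} := fun h => by
    rw [h, Set.ncard_singleton] at hC; omega
  obtain hD | ⟨c, hc1, hDdesc⟩ | hDdesc := classify D
  · exact ⟨1, by rw [AMat_of_singleton hD, one_mul, one_smul]⟩
  · -- D is a fiber over c ≠ 1 : eigenvalue 0
    have key : ∃ sC : Fˣ, ∀ z ∈ C.carrier, z.right = sC := by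
      obtain h1 | ⟨s, _, hCdesc⟩ | hCdesc := classify C
      · exact absurd h1 hCne
      · exact ⟨s, fun z hz => by rw [hCdesc] at hz; exact hz⟩
      · exact ⟨1, fun z hz => by rw [hCdesc] at hz; exact hz.1⟩
    obtain ⟨sC, hsC⟩ := key
    refine ⟨0, ?_⟩
    ext x y
    rw [mul_BMat_apply, zero_smul, Matrix.zero_apply]
    by_cases hy : y ∈ C.carrier
    · by_cases hsx : sC = c * x.right
      · exact sum_ite_all C hy hC _ fun z hz => by
          rw [hDdesc]; exact (mem_fiber_iff c z x).2 ((hsC z hz).trans hsx)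
      · exact sum_ite_none C _ fun z hz h =>
          hsx ((hsC z hz).symm.trans ((mem_fiber_iff c z x).1 (by rwa [hDdesc] at h)))
    · exact sum_ite_zero_col C hy _
  · -- D is the translation class : eigenvalue -1
    refine ⟨-1, ?_⟩
    ext x y
    rw [mul_BMat_apply, Matrix.smul_apply, smul_eq_mul]
    by_cases hy : y ∈ C.carrier
    · obtain h1 | ⟨s, hs1, hCdesc⟩ | hCdesc := classify C
      · exact absurd h1 hCne
      · -- C is a fiber over s ≠ 1
        by_cases hx : x ∈ C.carrier
        · rw [sum_ite_ne C hx hy hC _ fun z hz => ?_]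
          · ring
          · rw [hDdesc, mem_tr_iff]
            rw [hCdesc] at hz hx
            exact ⟨fun h => h.2, fun h => ⟨hz.trans hx.symm, h⟩⟩
        · rw [sum_ite_none C _ fun z hz h => ?_, BMat_apply_of_not_left C hx, mul_zero]
          rw [hDdesc, mem_tr_iff] at h
          rw [hCdesc] at hz
          exact hx (by rw [hCdesc]; exact h.1.symm.trans hz)
      · -- C is the translation class
        by_cases hx : x ∈ C.carrier
        · rw [sum_ite_ne C hx hy hC _ fun z hz => ?_]
          · ring
          · rw [hDdesc, mem_tr_iff]
            rw [hCdesc] at hz hx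
            exact ⟨fun h => h.2, fun h => ⟨hz.1.trans hx.1.symm, h⟩⟩
        · by_cases hx1 : x.right = 1
          · have hxone : x = 1 := by
              by_contra hne
              exact hx (by rw [hCdesc]; exact ⟨hx1, hne⟩)
            rw [sum_ite_all C hy hC _ fun z hz => ?_, BMat_apply_of_not_left C hx, mul_zero]
            rw [hDdesc, mem_tr_iff]
            rw [hCdesc] at hz
            exact ⟨hz.1.trans hx1.symm, by rw [hxone]; exact hz.2⟩
          · rw [sum_ite_none C _ fun z hz h => ?_, BMat_apply_of_not_left C hx, mul_zero]
            rw [hDdesc, mem_tr_iff] at h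
            rw [hCdesc] at hz
            exact hx1 (h.1.symm.trans hz.1)
    · rw [sum_ite_zero_col C hy _, BMat_apply_of_not_right C hy, mul_zero]

end AffineEigen

section Final
variable {F : Type*} [Field F] [Fintype F] [DecidableEq F]

lemma BMat_transpose {G : Type*} [Group G] [Fintype G] [DecidableEq G] (C : ConjClasses G) :
    (BMat G C).transpose = BMat G C := by
  ext x y
  exact BMat_symm C y x

lemma eigen_right {C D : ConjClasses (AffineGroup F)} (hC : 2 ≤ C.carrier.ncard) :
    ∃ l : ℂ, BMat (AffineGroup F) C * AMat (AffineGroup F) D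
      = l • BMat (AffineGroup F) C := by
  obtain ⟨D', hD'⟩ := AMat_transpose D
  obtain ⟨l, hl⟩ := eigen (C := C) (D := D') hC
  refine ⟨l, ?_⟩
  have h2 : (AMat (AffineGroup F) D').transpose = AMat (AffineGroup F) D := by
    rw [← hD', Matrix.transpose_transpose]
  calc BMat (AffineGroup F) C * AMat (AffineGroup F) D
      = ((AMat (AffineGroup F) D' * BMat (AffineGroup F) C)).transpose := by
        rw [Matrix.transpose_mul, h2, BMat_transpose]
    _ = (l • BMat (AffineGroup F) C).transpose := by rw [hl]
    _ = l • BMat (AffineGroup F) C := by rw [Matrix.transpose_smul, BMat_transpose]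

end Final

/-- For a conjugacy class `C` of the affine group `G_q = F ⋊ Fˣ` with `|C| ≥ 2`, one has
`B_C² = (|C|/(|C|-1)) • B_C`; consequently `((|C|-1)/|C|) • B_C` is an idempotent of the
Terwilliger algebra `T(G_q)` spanning a one-dimensional two-sided ideal of `T(G_q)`. -/
theorem affineGroup_BMat_idempotent (q : ℕ) (hq : IsPrimePow q)
    (F : Type*) [Field F] [Fintype F] [DecidableEq F] (hF : Fintype.card F = q)
    (C : ConjClasses (AffineGroup F)) (hC : 2 ≤ C.carrier.ncard) :
    BMat (AffineGroup F) C * BMat (AffineGroup F) C =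
      ((C.carrier.ncard : ℂ) / ((C.carrier.ncard : ℂ) - 1)) • BMat (AffineGroup F) C ∧
    IsIdempotentElem
      ((((C.carrier.ncard : ℂ) - 1) / (C.carrier.ncard : ℂ)) • BMat (AffineGroup F) C) ∧
    (((C.carrier.ncard : ℂ) - 1) / (C.carrier.ncard : ℂ)) • BMat (AffineGroup F) C ∈
      TerwilligerAlgebra (AffineGroup F) ∧
    Module.finrank ℂ (Submodule.span ℂ
      {(((C.carrier.ncard : ℂ) - 1) / (C.carrier.ncard : ℂ)) • BMat (AffineGroup F) C}) = 1 ∧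
    ∀ M ∈ TerwilligerAlgebra (AffineGroup F),
      M * ((((C.carrier.ncard : ℂ) - 1) / (C.carrier.ncard : ℂ)) • BMat (AffineGroup F) C) ∈
        Submodule.span ℂ
          {(((C.carrier.ncard : ℂ) - 1) / (C.carrier.ncard : ℂ)) • BMat (AffineGroup F) C} ∧
      ((((C.carrier.ncard : ℂ) - 1) / (C.carrier.ncard : ℂ)) • BMat (AffineGroup F) C) * M ∈
        Submodule.span ℂ
          {(((C.carrier.ncard : ℂ) - 1) / (C.carrier.ncard : ℂ)) • BMat (AffineGroup F) C} := by
  unfold TerwilligerAlgebra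
  have hk1 := ncard_sub_one_ne C hC
  have hk0 := ncard_cast_ne C hC
  set κ : ℂ := (C.carrier.ncard : ℂ) with hκ
  set B := BMat (AffineGroup F) C with hB
  have hsq : B * B = (κ / (κ - 1)) • B := BMat_sq C hC
  refine ⟨hsq, ?_, ?_, ?_, ?_⟩
  · show ((κ - 1) / κ) • B * ((κ - 1) / κ) • B = ((κ - 1) / κ) • B
    rw [Matrix.smul_mul, Matrix.mul_smul, hsq, smul_smul, smul_smul]
    congr 1
    field_simp
  · exact Subalgebra.smul_mem _ (BMat_mem C hC) _
  · have hne : ((κ - 1) / κ) • B ≠ 0 := by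
      obtain ⟨x, hx⟩ := Set.nonempty_of_ncard_ne_zero (s := C.carrier) (by omega)
      intro h
      have h2 : (((κ - 1) / κ) • B) x x = 0 := by rw [h]; rfl
      rw [Matrix.smul_apply, hB, BMat_diag C hx, smul_eq_mul, mul_one] at h2
      exact div_ne_zero hk1 hk0 h2
    exact finrank_span_singleton hne
  · intro M hM
    have main : (∃ l : ℂ, M * B = l • B) ∧ (∃ l : ℂ, B * M = l • B) := by
      refine Algebra.adjoin_induction ?_ ?_ ?_ ?_ hM
      · rintro x (⟨D, rfl⟩ | ⟨D, rfl⟩)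
        · exact ⟨eigen hC, eigen_right hC⟩
        · exact ⟨EMat_mul_BMat C D, BMat_mul_EMat C D⟩
      · intro r
        refine ⟨⟨r, (Algebra.smul_def r B).symm⟩, ⟨r, ?_⟩⟩
        rw [← Algebra.commutes r B, ← Algebra.smul_def]
      · rintro x y _ _ ⟨⟨l1, h1⟩, ⟨m1, g1⟩⟩ ⟨⟨l2, h2⟩, ⟨m2, g2⟩⟩
        exact ⟨⟨l1 + l2, by rw [add_mul, h1, h2, add_smul]⟩,
          ⟨m1 + m2, by rw [mul_add, g1, g2, add_smul]⟩⟩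
      · rintro x y _ _ ⟨⟨l1, h1⟩, ⟨m1, g1⟩⟩ ⟨⟨l2, h2⟩, ⟨m2, g2⟩⟩
        exact ⟨⟨l1 * l2, by rw [mul_assoc, h2, Matrix.mul_smul, h1, smul_smul, mul_comm]⟩,
          ⟨m1 * m2, by rw [← mul_assoc, g1, Matrix.smul_mul, g2, smul_smul]⟩⟩
    obtain ⟨⟨l, hl⟩, ⟨m, hm⟩⟩ := main
    constructor
    · exact Submodule.mem_span_singleton.2 ⟨l, by
        rw [Matrix.mul_smul, hl, smul_smul, smul_smul, mul_comm]⟩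
    · exact Submodule.mem_span_singleton.2 ⟨m, by
        rw [Matrix.smul_mul, hm, smul_smul, smul_smul, mul_comm]⟩
end
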